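/- The supremum over functions h(x) of 1/β₀[h(x)] equals the squared maximum correlation: sup_{h(x)} 1/β₀[h(x)] = ρ_m²(X;Y). Concretely, for any nonconstant h with finite second moment, 1/β₀[h(x)] = E[(E[f(X)|Y])²] where f(x) = (h(x) − E[h(X)]) / (E[(h(X) − E[h(X)])²])^{1/2}, so the supremum equals the maximum of E[(E[f(X)|Y])²] over f with E[f(X)] = 0 and E[f(X)²] = 1, which is ρ_m²(X;Y) by Rényi's characterization. -/

import Mathlib

open Filter Asymptotics
open scoped BigOperators Topology

/-- A joint probability distribution `p(x,y)` on finite types `X` and `Y`. -/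
structure JointDist (X Y : Type) [Fintype X] [Fintype Y] where
  p : X → Y → ℝ
  nonneg : ∀ x y, 0 ≤ p x y
  sum_one : ∑ x, ∑ y, p x y = 1

variable {X Y Z : Type} [Fintype X] [Fintype Y] [Fintype Z]

/-- The marginal distribution `p(x)` of `X`. -/
def JointDist.pX (P : JointDist X Y) (x : X) : ℝ := ∑ y, P.p x y

/-- The marginal distribution `p(y)` of `Y`. -/
def JointDist.pY (P : JointDist X Y) (y : Y) : ℝ := ∑ x, P.p x y

/-- An encoder: a conditional distribution `p(z|x)` specifying a representation `Z` of `X`;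
together with `p(x,y)` it determines the Markov chain `Z ← X ↔ Y`. -/
structure Encoder (X Z : Type) [Fintype X] [Fintype Z] where
  c : X → Z → ℝ
  nonneg : ∀ x z, 0 ≤ c x z
  sum_one : ∀ x, ∑ z, c x z = 1

/-- The mutual information `I(X;Z)` of the representation given by encoder `e`,
where `p(x,z) = p(x) p(z|x)` and `p(z) = ∑ x, p(x) p(z|x)`. -/
noncomputable def IXZ (P : JointDist X Y) (e : Encoder X Z) : ℝ :=
  ∑ x, ∑ z, P.pX x * e.c x z *
    Real.log (P.pX x * e.c x z / (P.pX x * ∑ x', P.pX x' * e.c x' z))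

/-- The mutual information `I(Y;Z)`, using the Markov chain `Z ← X ↔ Y`,
i.e. `p(y,z) = ∑ x, p(x,y) p(z|x)`. -/
noncomputable def IYZ (P : JointDist X Y) (e : Encoder X Z) : ℝ :=
  ∑ y, ∑ z, (∑ x, P.p x y * e.c x z) *
    Real.log ((∑ x, P.p x y * e.c x z) / (P.pY y * ∑ x, P.pX x * e.c x z))

/-- The Information Bottleneck objective `IB_β(X,Y;Z) = I(X;Z) − β·I(Y;Z)`. -/
noncomputable def IB (P : JointDist X Y) (β : ℝ) (e : Encoder X Z) : ℝ :=
  IXZ P e - β * IYZ P e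

/-- `(X,Y)` is `IB_β`-learnable if some representation `Z` (given by some encoder `p₁(z|x)`)
achieves `IB_β(X,Y;Z) < 0`, where `0` is the value attained by the trivial representation
`p(z|x) = p(z)`. -/
def IBLearnable (P : JointDist X Y) (β : ℝ) : Prop :=
  ∃ (n : ℕ) (e : Encoder X (Fin n)), IB P β e < 0

/-- The functional `β₀[h(x)] = ( E_x[h²] − (E_x[h])² ) / ( E_y[(E_{x|y}[h])²] − (E_x[h])² )`,
where `E_{x|y}[h] = (∑ x, p(x,y) h(x)) / p(y)`, so that
`E_y[(E_{x|y}[h])²] = ∑ y, (∑ x, p(x,y) h(x))² / p(y)`. -/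
noncomputable def beta0Func (P : JointDist X Y) (h : X → ℝ) : ℝ :=
  ((∑ x, P.pX x * (h x) ^ 2) - (∑ x, P.pX x * h x) ^ 2) /
    ((∑ y, (∑ x, P.p x y * h x) ^ 2 / P.pY y) - (∑ x, P.pX x * h x) ^ 2)

/-- The maximum correlation `ρ_m(X;Y) = sup E[f(X)g(Y)]` over real-valued `f, g` with
`E[f(X)] = E[g(Y)] = 0` and `E[f(X)²] = E[g(Y)²] = 1`. -/
noncomputable def maxCorr (P : JointDist X Y) : ℝ :=
  sSup {r : ℝ | ∃ (f : X → ℝ) (g : Y → ℝ),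
    (∑ x, P.pX x * f x = 0) ∧ (∑ y, P.pY y * g y = 0) ∧
    (∑ x, P.pX x * (f x) ^ 2 = 1) ∧ (∑ y, P.pY y * (g y) ^ 2 = 1) ∧
    r = ∑ x, ∑ y, P.p x y * (f x * g y)}

/- **STATEMENT 15.** The supremum over functions `h(x)` of `1/β₀[h(x)]` equals the squared
maximum correlation: `sup_h 1/β₀[h] = ρ_m²(X;Y)`. Concretely, for any nonconstant `h`,
`1/β₀[h] = E[(E[f(X)|Y])²]` where `f(x) = (h(x) − E[h(X)]) / (E[(h(X) − E[h(X)])²])^{1/2}` is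
the standardization of `h` (here `E[(E[f|Y])²] = ∑ y, (∑ x, p(x,y) f(x))²/p(y)`); the supremum
therefore equals the maximum of `E[(E[f(X)|Y])²]` over standardized `f`, which is `ρ_m²(X;Y)`
by Rényi's characterization. -/
section Helpers

variable (P : JointDist X Y)

lemma sum_pX' : ∑ x, P.pX x = 1 := by
  simp only [JointDist.pX]; exact P.sum_one

lemma sum_pY' : ∑ y, P.pY y = 1 := by
  simp only [JointDist.pY]; rw [Finset.sum_comm]; exact P.sum_one

lemma swap_sum' (f : X → ℝ) :
    ∑ y, ∑ x, P.p x y * f x = ∑ x, P.pX x * f x := by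
  rw [Finset.sum_comm]
  exact Finset.sum_congr rfl fun x _ => by rw [JointDist.pX, Finset.sum_mul]

lemma var_expand' (h : X → ℝ) :
    ∑ x, P.pX x * (h x - ∑ x', P.pX x' * h x') ^ 2
      = (∑ x, P.pX x * h x ^ 2) - (∑ x, P.pX x * h x) ^ 2 := by
  have e : ∀ x, P.pX x * (h x - ∑ x', P.pX x' * h x') ^ 2
      = P.pX x * h x ^ 2 - 2 * (∑ x', P.pX x' * h x') * (P.pX x * h x)
        + (∑ x', P.pX x' * h x') ^ 2 * P.pX x := fun x => by ring
  simp_rw [e, Finset.sum_add_distrib, Finset.sum_sub_distrib, ← Finset.mul_sum, sum_pX']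
  ring

lemma D_expand' (hY : ∀ y, 0 < P.pY y) (h : X → ℝ) :
    ∑ y, (∑ x, P.p x y * (h x - ∑ x', P.pX x' * h x')) ^ 2 / P.pY y
      = (∑ y, (∑ x, P.p x y * h x) ^ 2 / P.pY y) - (∑ x, P.pX x * h x) ^ 2 := by
  have e1 : ∀ y, ∑ x, P.p x y * (h x - ∑ x', P.pX x' * h x')
      = (∑ x, P.p x y * h x) - (∑ x', P.pX x' * h x') * P.pY y := by
    intro y
    rw [JointDist.pY, Finset.mul_sum, ← Finset.sum_sub_distrib]
    exact Finset.sum_congr rfl fun x _ => by ring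
  have e2 : ∀ y, ((∑ x, P.p x y * h x) - (∑ x', P.pX x' * h x') * P.pY y) ^ 2 / P.pY y
      = (∑ x, P.p x y * h x) ^ 2 / P.pY y
        - 2 * (∑ x', P.pX x' * h x') * (∑ x, P.p x y * h x)
        + (∑ x', P.pX x' * h x') ^ 2 * P.pY y := by
    intro y
    have hy := (hY y).ne'
    field_simp
    ring
  simp_rw [e1, e2, Finset.sum_add_distrib, Finset.sum_sub_distrib, ← Finset.mul_sum,
    swap_sum', sum_pY']
  ring

lemma var_pos' (hX : ∀ x, 0 < P.pX x) (h : X → ℝ)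
    (hc : ¬ ∃ c : ℝ, ∀ x, h x = c) :
    0 < ∑ x, P.pX x * (h x - ∑ x', P.pX x' * h x') ^ 2 := by
  push_neg at hc
  obtain ⟨x0, hx0⟩ := hc (∑ x', P.pX x' * h x')
  refine Finset.sum_pos' (fun x _ => mul_nonneg (hX x).le (sq_nonneg _))
    ⟨x0, Finset.mem_univ _, mul_pos (hX x0) ?_⟩
  have : h x0 - ∑ x', P.pX x' * h x' ≠ 0 := sub_ne_zero.mpr hx0
  positivity

lemma inv_beta0' (hX : ∀ x, 0 < P.pX x) (hY : ∀ y, 0 < P.pY y)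
    (h : X → ℝ) (hc : ¬ ∃ c : ℝ, ∀ x, h x = c) :
    (beta0Func P h)⁻¹ =
      ∑ y, (∑ x, P.p x y *
          ((h x - ∑ x', P.pX x' * h x') /
            Real.sqrt (∑ x', P.pX x' * (h x' - ∑ x'', P.pX x'' * h x'') ^ 2))) ^ 2
        / P.pY y := by
  have hNpos := var_pos' P hX h hc
  simp only [beta0Func]
  rw [inv_div, ← var_expand' P h, ← D_expand' P hY h, Finset.sum_div]
  refine Finset.sum_congr rfl fun y _ => ?_
  have e1 : ∑ x, P.p x y *
        ((h x - ∑ x', P.pX x' * h x') /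
          Real.sqrt (∑ x', P.pX x' * (h x' - ∑ x'', P.pX x'' * h x'') ^ 2))
      = (∑ x, P.p x y * (h x - ∑ x', P.pX x' * h x')) /
          Real.sqrt (∑ x', P.pX x' * (h x' - ∑ x'', P.pX x'' * h x'') ^ 2) := by
    rw [Finset.sum_div]
    exact Finset.sum_congr rfl fun x _ => (mul_div_assoc _ _ _).symm
  rw [e1, div_pow, Real.sq_sqrt hNpos.le]
  ring

lemma exists_std' (hX : ∀ x, 0 < P.pX x) (hY : ∀ y, 0 < P.pY y)
    (h : X → ℝ) (hc : ¬ ∃ c : ℝ, ∀ x, h x = c) :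
    ∃ f : X → ℝ, (∑ x, P.pX x * f x = 0) ∧ (∑ x, P.pX x * f x ^ 2 = 1) ∧
      (beta0Func P h)⁻¹ = ∑ y, (∑ x, P.p x y * f x) ^ 2 / P.pY y := by
  have hNpos := var_pos' P hX h hc
  refine ⟨fun x => (h x - ∑ x', P.pX x' * h x') /
      Real.sqrt (∑ x', P.pX x' * (h x' - ∑ x'', P.pX x'' * h x'') ^ 2), ?_, ?_, ?_⟩
  · have hzero : ∑ x, P.pX x * (h x - ∑ x', P.pX x' * h x') = 0 := by
      simp_rw [mul_sub]
      rw [Finset.sum_sub_distrib, ← Finset.sum_mul, sum_pX', one_mul, sub_self]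
    have e : ∑ x, P.pX x * ((h x - ∑ x', P.pX x' * h x') /
          Real.sqrt (∑ x', P.pX x' * (h x' - ∑ x'', P.pX x'' * h x'') ^ 2))
        = (∑ x, P.pX x * (h x - ∑ x', P.pX x' * h x')) /
          Real.sqrt (∑ x', P.pX x' * (h x' - ∑ x'', P.pX x'' * h x'') ^ 2) := by
      rw [Finset.sum_div]
      exact Finset.sum_congr rfl fun x _ => (mul_div_assoc _ _ _).symm
    beta_reduce
    rw [e, hzero, zero_div]
  · have e : ∀ x, P.pX x * ((h x - ∑ x', P.pX x' * h x') /
          Real.sqrt (∑ x', P.pX x' * (h x' - ∑ x'', P.pX x'' * h x'') ^ 2)) ^ 2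
        = (P.pX x * (h x - ∑ x', P.pX x' * h x') ^ 2) /
          (∑ x', P.pX x' * (h x' - ∑ x'', P.pX x'' * h x'') ^ 2) := by
      intro x
      rw [div_pow, Real.sq_sqrt hNpos.le]
      ring
    beta_reduce
    simp_rw [e]
    rw [← Finset.sum_div, div_self hNpos.ne']
  · simpa using inv_beta0' P hX hY h hc

lemma V_le_one' (hY : ∀ y, 0 < P.pY y) (f : X → ℝ)
    (hf2 : ∑ x, P.pX x * f x ^ 2 = 1) :
    ∑ y, (∑ x, P.p x y * f x) ^ 2 / P.pY y ≤ 1 := by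
  have hterm : ∀ y, (∑ x, P.p x y * f x) ^ 2 / P.pY y ≤ ∑ x, P.p x y * f x ^ 2 := by
    intro y
    rw [div_le_iff₀ (hY y)]
    have a1 : ∑ x, Real.sqrt (P.p x y) ^ 2 = P.pY y := by
      rw [JointDist.pY]
      exact Finset.sum_congr rfl fun x _ => Real.sq_sqrt (P.nonneg x y)
    have a2 : ∑ x, (Real.sqrt (P.p x y) * f x) ^ 2 = ∑ x, P.p x y * f x ^ 2 :=
      Finset.sum_congr rfl fun x _ => by rw [mul_pow, Real.sq_sqrt (P.nonneg x y)]
    calc (∑ x, P.p x y * f x) ^ 2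
        = (∑ x, Real.sqrt (P.p x y) * (Real.sqrt (P.p x y) * f x)) ^ 2 := by
          congr 1
          exact Finset.sum_congr rfl fun x _ => by
            rw [← mul_assoc, Real.mul_self_sqrt (P.nonneg x y)]
      _ ≤ (∑ x, Real.sqrt (P.p x y) ^ 2) * ∑ x, (Real.sqrt (P.p x y) * f x) ^ 2 :=
          Finset.sum_mul_sq_le_sq_mul_sq _ _ _
      _ = (∑ x, P.p x y * f x ^ 2) * P.pY y := by rw [a1, a2, mul_comm]
  calc ∑ y, (∑ x, P.p x y * f x) ^ 2 / P.pY y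
      ≤ ∑ y, ∑ x, P.p x y * f x ^ 2 := Finset.sum_le_sum fun y _ => hterm y
    _ = 1 := by rw [swap_sum' P (fun x => f x ^ 2)]; exact hf2

lemma corr_eq' (f : X → ℝ) (g : Y → ℝ) :
    ∑ x, ∑ y, P.p x y * (f x * g y) = ∑ y, (∑ x, P.p x y * f x) * g y := by
  rw [Finset.sum_comm]
  refine Finset.sum_congr rfl fun y _ => ?_
  rw [Finset.sum_mul]
  exact Finset.sum_congr rfl fun x _ => by ring

lemma cs2' (hY : ∀ y, 0 < P.pY y) (f : X → ℝ) (g : Y → ℝ) :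
    (∑ y, (∑ x, P.p x y * f x) * g y) ^ 2
      ≤ (∑ y, (∑ x, P.p x y * f x) ^ 2 / P.pY y) * (∑ y, P.pY y * g y ^ 2) := by
  have e : ∀ y, (∑ x, P.p x y * f x) * g y
      = ((∑ x, P.p x y * f x) / Real.sqrt (P.pY y)) * (Real.sqrt (P.pY y) * g y) := by
    intro y
    have hs : Real.sqrt (P.pY y) ≠ 0 := Real.sqrt_ne_zero'.mpr (hY y)
    field_simp
  have a1 : ∑ y, ((∑ x, P.p x y * f x) / Real.sqrt (P.pY y)) ^ 2
      = ∑ y, (∑ x, P.p x y * f x) ^ 2 / P.pY y :=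
    Finset.sum_congr rfl fun y _ => by rw [div_pow, Real.sq_sqrt (hY y).le]
  have a2 : ∑ y, (Real.sqrt (P.pY y) * g y) ^ 2 = ∑ y, P.pY y * g y ^ 2 :=
    Finset.sum_congr rfl fun y _ => by rw [mul_pow, Real.sq_sqrt (hY y).le]
  calc (∑ y, (∑ x, P.p x y * f x) * g y) ^ 2
      = (∑ y, ((∑ x, P.p x y * f x) / Real.sqrt (P.pY y))
          * (Real.sqrt (P.pY y) * g y)) ^ 2 := by
        congr 1
        exact Finset.sum_congr rfl fun y _ => e y
    _ ≤ (∑ y, ((∑ x, P.p x y * f x) / Real.sqrt (P.pY y)) ^ 2)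
          * ∑ y, (Real.sqrt (P.pY y) * g y) ^ 2 :=
        Finset.sum_mul_sq_le_sq_mul_sq _ _ _
    _ = _ := by rw [a1, a2]

lemma B_sq_le_V' (hY : ∀ y, 0 < P.pY y) (f : X → ℝ) (g : Y → ℝ)
    (hgv : ∑ y, P.pY y * (g y) ^ 2 = 1) :
    (∑ x, ∑ y, P.p x y * (f x * g y)) ^ 2
      ≤ ∑ y, (∑ x, P.p x y * f x) ^ 2 / P.pY y := by
  rw [corr_eq' P f g]
  calc (∑ y, (∑ x, P.p x y * f x) * g y) ^ 2
      ≤ (∑ y, (∑ x, P.p x y * f x) ^ 2 / P.pY y) * (∑ y, P.pY y * g y ^ 2) :=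
        cs2' P hY f g
    _ = _ := by rw [hgv, mul_one]

lemma std_nonconst' (f : X → ℝ) (hm : ∑ x, P.pX x * f x = 0)
    (hv : ∑ x, P.pX x * f x ^ 2 = 1) : ¬ ∃ c : ℝ, ∀ x, f x = c := by
  rintro ⟨c, hc⟩
  have h1 : c = 0 := by
    have h2 := hm
    simp_rw [hc] at h2
    rwa [← Finset.sum_mul, sum_pX', one_mul] at h2
  rw [h1] at hc
  simp_rw [hc] at hv
  simp at hv

lemma inv_beta0_std' (hX : ∀ x, 0 < P.pX x) (hY : ∀ y, 0 < P.pY y) (f : X → ℝ)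
    (hm : ∑ x, P.pX x * f x = 0) (hv : ∑ x, P.pX x * f x ^ 2 = 1) :
    (beta0Func P f)⁻¹ = ∑ y, (∑ x, P.p x y * f x) ^ 2 / P.pY y := by
  rw [inv_beta0' P hX hY f (std_nonconst' P f hm hv)]
  simp_rw [hm, sub_zero, hv, Real.sqrt_one, div_one]

lemma B_bddAbove' (hY : ∀ y, 0 < P.pY y) :
    BddAbove {r : ℝ | ∃ (f : X → ℝ) (g : Y → ℝ),
      (∑ x, P.pX x * f x = 0) ∧ (∑ y, P.pY y * g y = 0) ∧
      (∑ x, P.pX x * (f x) ^ 2 = 1) ∧ (∑ y, P.pY y * (g y) ^ 2 = 1) ∧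
      r = ∑ x, ∑ y, P.p x y * (f x * g y)} := by
  refine ⟨1, ?_⟩
  rintro r ⟨f, g, hm, hgm, hv, hgv, rfl⟩
  have h1 := (B_sq_le_V' P hY f g hgv).trans (V_le_one' P hY f hv)
  nlinarith [h1, sq_nonneg ((∑ x, ∑ y, P.p x y * (f x * g y)) - 1)]

lemma B_neg' {r : ℝ}
    (hr : r ∈ {r : ℝ | ∃ (f : X → ℝ) (g : Y → ℝ),
      (∑ x, P.pX x * f x = 0) ∧ (∑ y, P.pY y * g y = 0) ∧
      (∑ x, P.pX x * (f x) ^ 2 = 1) ∧ (∑ y, P.pY y * (g y) ^ 2 = 1) ∧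
      r = ∑ x, ∑ y, P.p x y * (f x * g y)}) :
    -r ∈ {r : ℝ | ∃ (f : X → ℝ) (g : Y → ℝ),
      (∑ x, P.pX x * f x = 0) ∧ (∑ y, P.pY y * g y = 0) ∧
      (∑ x, P.pX x * (f x) ^ 2 = 1) ∧ (∑ y, P.pY y * (g y) ^ 2 = 1) ∧
      r = ∑ x, ∑ y, P.p x y * (f x * g y)} := by
  obtain ⟨f, g, hm, hgm, hv, hgv, rfl⟩ := hr
  refine ⟨f, fun y => -g y, hm, ?_, hv, ?_, ?_⟩
  · simpa [mul_neg, Finset.sum_neg_distrib, neg_eq_zero] using hgm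
  · simpa [neg_sq] using hgv
  · simp [mul_neg, Finset.sum_neg_distrib]

lemma maxCorr_nonneg' (hY : ∀ y, 0 < P.pY y) : 0 ≤ maxCorr P := by
  rw [maxCorr]
  rcases Set.eq_empty_or_nonempty {r : ℝ | ∃ (f : X → ℝ) (g : Y → ℝ),
      (∑ x, P.pX x * f x = 0) ∧ (∑ y, P.pY y * g y = 0) ∧
      (∑ x, P.pX x * (f x) ^ 2 = 1) ∧ (∑ y, P.pY y * (g y) ^ 2 = 1) ∧
      r = ∑ x, ∑ y, P.p x y * (f x * g y)} with hE | hNE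
  · rw [hE, Real.sSup_empty]
  · obtain ⟨r, hr⟩ := hNE
    rcases le_total 0 r with h0 | h0
    · exact h0.trans (le_csSup (B_bddAbove' P hY) hr)
    · exact (neg_nonneg.mpr h0).trans (le_csSup (B_bddAbove' P hY) (B_neg' P hr))

lemma sqrtV_mem' (hY : ∀ y, 0 < P.pY y) (f : X → ℝ)
    (hm : ∑ x, P.pX x * f x = 0) (hv : ∑ x, P.pX x * f x ^ 2 = 1)
    (hV : 0 < ∑ y, (∑ x, P.p x y * f x) ^ 2 / P.pY y) :
    Real.sqrt (∑ y, (∑ x, P.p x y * f x) ^ 2 / P.pY y) ∈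
      {r : ℝ | ∃ (f : X → ℝ) (g : Y → ℝ),
        (∑ x, P.pX x * f x = 0) ∧ (∑ y, P.pY y * g y = 0) ∧
        (∑ x, P.pX x * (f x) ^ 2 = 1) ∧ (∑ y, P.pY y * (g y) ^ 2 = 1) ∧
        r = ∑ x, ∑ y, P.p x y * (f x * g y)} := by
  have hs : Real.sqrt (∑ y, (∑ x, P.p x y * f x) ^ 2 / P.pY y) ≠ 0 :=
    Real.sqrt_ne_zero'.mpr hV
  refine ⟨f, fun y => (∑ x, P.p x y * f x) /
      (P.pY y * Real.sqrt (∑ y, (∑ x, P.p x y * f x) ^ 2 / P.pY y)), hm, ?_, hv, ?_, ?_⟩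
  · have e : ∀ y, P.pY y * ((∑ x, P.p x y * f x) /
        (P.pY y * Real.sqrt (∑ y, (∑ x, P.p x y * f x) ^ 2 / P.pY y)))
        = (∑ x, P.p x y * f x) /
            Real.sqrt (∑ y, (∑ x, P.p x y * f x) ^ 2 / P.pY y) := by
      intro y
      have h1 := (hY y).ne'
      field_simp
    beta_reduce
    simp_rw [e]
    rw [← Finset.sum_div, swap_sum' P f, hm, zero_div]
  · have e : ∀ y, P.pY y * ((∑ x, P.p x y * f x) /
        (P.pY y * Real.sqrt (∑ y, (∑ x, P.p x y * f x) ^ 2 / P.pY y))) ^ 2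
        = ((∑ x, P.p x y * f x) ^ 2 / P.pY y) /
            (∑ y, (∑ x, P.p x y * f x) ^ 2 / P.pY y) := by
      intro y
      rw [div_pow, mul_pow, Real.sq_sqrt hV.le]
      have h1 := (hY y).ne'
      field_simp
    beta_reduce
    simp_rw [e]
    rw [← Finset.sum_div, div_self hV.ne']
  · rw [corr_eq']
    have e : ∀ y, (∑ x, P.p x y * f x) * ((∑ x, P.p x y * f x) /
        (P.pY y * Real.sqrt (∑ y, (∑ x, P.p x y * f x) ^ 2 / P.pY y)))
        = ((∑ x, P.p x y * f x) ^ 2 / P.pY y) /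
            Real.sqrt (∑ y, (∑ x, P.p x y * f x) ^ 2 / P.pY y) := by
      intro y
      have h1 := (hY y).ne'
      field_simp
    beta_reduce
    simp_rw [e]
    rw [← Finset.sum_div, Real.div_sqrt]

end Helpers

/-- The supremum over functions `h(x)` of `1/β₀[h(x)]` equals the squared
maximum correlation (detailed docstring in original statement). -/
theorem sup_inv_beta0Func_eq_maxCorr_sq (P : JointDist X Y)
    (hX : ∀ x, 0 < P.pX x) (hY : ∀ y, 0 < P.pY y) :
    (∀ h : X → ℝ, (¬ ∃ c : ℝ, ∀ x, h x = c) →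
      (beta0Func P h)⁻¹ =
        ∑ y, (∑ x, P.p x y *
            ((h x - ∑ x', P.pX x' * h x') /
              Real.sqrt (∑ x', P.pX x' * (h x' - ∑ x'', P.pX x'' * h x'') ^ 2))) ^ 2
          / P.pY y) ∧
    sSup {r : ℝ | ∃ h : X → ℝ, (¬ ∃ c : ℝ, ∀ x, h x = c) ∧ r = (beta0Func P h)⁻¹} =
      (maxCorr P) ^ 2 := by
  refine ⟨fun h hc => inv_beta0' P hX hY h hc, ?_⟩
  have hAbdd : BddAbove {r : ℝ | ∃ h : X → ℝ,
      (¬ ∃ c : ℝ, ∀ x, h x = c) ∧ r = (beta0Func P h)⁻¹} := by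
    refine ⟨1, ?_⟩
    rintro a ⟨h, hc, rfl⟩
    obtain ⟨f, hm, hv, hval⟩ := exists_std' P hX hY h hc
    rw [hval]
    exact V_le_one' P hY f hv
  have hAnn : 0 ≤ sSup {r : ℝ | ∃ h : X → ℝ,
      (¬ ∃ c : ℝ, ∀ x, h x = c) ∧ r = (beta0Func P h)⁻¹} := by
    apply Real.sSup_nonneg
    rintro a ⟨h, hc, rfl⟩
    obtain ⟨f, hm, hv, hval⟩ := exists_std' P hX hY h hc
    rw [hval]
    exact Finset.sum_nonneg fun y _ => div_nonneg (sq_nonneg _) (hY y).le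
  apply le_antisymm
  · apply Real.sSup_le _ (sq_nonneg _)
    rintro a ⟨h, hc, rfl⟩
    obtain ⟨f, hm, hv, hval⟩ := exists_std' P hX hY h hc
    rw [hval]
    have hV0 : 0 ≤ ∑ y, (∑ x, P.p x y * f x) ^ 2 / P.pY y :=
      Finset.sum_nonneg fun y _ => div_nonneg (sq_nonneg _) (hY y).le
    rcases hV0.lt_or_eq with hV | hV
    · have hmem := sqrtV_mem' P hY f hm hv hV
      have h1 : Real.sqrt (∑ y, (∑ x, P.p x y * f x) ^ 2 / P.pY y) ≤ maxCorr P := by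
        rw [maxCorr]
        exact le_csSup (B_bddAbove' P hY) hmem
      calc ∑ y, (∑ x, P.p x y * f x) ^ 2 / P.pY y
          = Real.sqrt (∑ y, (∑ x, P.p x y * f x) ^ 2 / P.pY y) ^ 2 :=
            (Real.sq_sqrt hV0).symm
        _ ≤ (maxCorr P) ^ 2 := pow_le_pow_left₀ (Real.sqrt_nonneg _) h1 2
    · rw [← hV]; exact sq_nonneg _
  · have hstep : maxCorr P ≤ Real.sqrt (sSup {r : ℝ | ∃ h : X → ℝ,
        (¬ ∃ c : ℝ, ∀ x, h x = c) ∧ r = (beta0Func P h)⁻¹}) := by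
      rw [maxCorr]
      apply Real.sSup_le _ (Real.sqrt_nonneg _)
      rintro r ⟨f, g, hm, hgm, hv, hgv, rfl⟩
      have h1 := B_sq_le_V' P hY f g hgv
      have hVA : (∑ y, (∑ x, P.p x y * f x) ^ 2 / P.pY y) ∈ {r : ℝ | ∃ h : X → ℝ,
          (¬ ∃ c : ℝ, ∀ x, h x = c) ∧ r = (beta0Func P h)⁻¹} :=
        ⟨f, std_nonconst' P f hm hv, (inv_beta0_std' P hX hY f hm hv).symm⟩
      have h2 := le_csSup hAbdd hVA
      calc (∑ x, ∑ y, P.p x y * (f x * g y))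
          ≤ |∑ x, ∑ y, P.p x y * (f x * g y)| := le_abs_self _
        _ = Real.sqrt ((∑ x, ∑ y, P.p x y * (f x * g y)) ^ 2) :=
            (Real.sqrt_sq_eq_abs _).symm
        _ ≤ _ := Real.sqrt_le_sqrt (h1.trans h2)
    calc (maxCorr P) ^ 2
        ≤ Real.sqrt (sSup {r : ℝ | ∃ h : X → ℝ,
            (¬ ∃ c : ℝ, ∀ x, h x = c) ∧ r = (beta0Func P h)⁻¹}) ^ 2 :=
          pow_le_pow_left₀ (maxCorr_nonneg' P hY) hstep 2
      _ = _ := Real.sq_sqrt hAnn
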